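/- Antisymmetry of the equivalence-quotient order: for a complete lattice L and compatible equivalence ∼, the relation X ≤_∼ Y on 𝒫_∼(L) (for all x ∈ X there is y ∈ Y with x ∼ y and x ≤ y) is antisymmetric: if X ≤_∼ Y and Y ≤_∼ X then X = Y. -/

import Mathlib

variable {L : Type*}

/-- Carrier of the quotient-like domain: subsets containing at most one
representative of each equivalence class. -/
def EqCarrier (r : L → L → Prop) : Set (Set L) :=
  {X : Set L | ∀ x ∈ X, ∀ y ∈ X, r x y → x = y}

/-- The order on the equivalence-quotient domain. -/
def eqLe [Preorder L] (r : L → L → Prop) (X Y : Set L) : Prop :=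
  ∀ x ∈ X, ∃ y ∈ Y, r x y ∧ x ≤ y

/-- The abstraction map of the equivalence adjunction. -/
def eqAlpha [CompleteLattice L] (r : L → L → Prop) (X : Set L) : Set L :=
  {z : L | ∃ x ∈ X, z = sSup (X ∩ {y : L | r y x})}

/-- The concretization map of the equivalence adjunction. -/
def eqGamma [Preorder L] (r : L → L → Prop) (Y : Set L) : Set L :=
  {z : L | ∃ y ∈ Y, r z y ∧ z ≤ y}

/-- Compatibility: every equivalence class is closed under joins of
non-empty subsets. -/
def CompatibleEquiv [CompleteLattice L] (r : L → L → Prop) : Prop :=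
  Equivalence r ∧
    ∀ (x : L) (S : Set L), S.Nonempty → (∀ y ∈ S, r y x) → r (sSup S) x

theorem subset_of_eqLe_of_eqLe [PartialOrder L] {r : L → L → Prop} [IsTrans L r]
    {X Y : Set L} (hX : X ∈ EqCarrier r) (hXY : eqLe r X Y) (hYX : eqLe r Y X) : X ⊆ Y := by
  intro x hx
  obtain ⟨y, hy, hxy, hle⟩ := hXY x hx
  obtain ⟨x', hx', hyx', hle'⟩ := hYX y hy
  obtain rfl : x = x' := hX x hx x' hx' (_root_.trans hxy hyx')
  rwa [le_antisymm hle hle']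

theorem eqLe_antisymm [CompleteLattice L]
    (r : L → L → Prop) (hr : CompatibleEquiv r)
    (X : Set L) (hX : X ∈ EqCarrier r) (Y : Set L) (hY : Y ∈ EqCarrier r)
    (hXY : eqLe r X Y) (hYX : eqLe r Y X) : X = Y :=
  have : IsTrans L r := ⟨fun _ _ _ => hr.1.trans⟩
  (subset_of_eqLe_of_eqLe hX hXY hYX).antisymm (subset_of_eqLe_of_eqLe hY hYX hXY)
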